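/- arXiv:2502.01252 — 2 statements merged into one kernel-verified Lean document; each statement's English description precedes it below -/
import Mathlib

section
/- Existence of Nash equilibrium in ACCES games: let X be a nonempty finite set, Y a nonempty compact metric space, and u : X × Y → ℝ continuous in y for each fixed x. Then there exist p* ∈ Δ_X and a Borel probability measure q* on Y such that U(p, q*) ≤ U(p*, q*) ≤ U(p*, q) for all p ∈ Δ_X and all Borel probability measures q on Y, where U(p,q) = ∑_x p(x) ∫_Y u(x,y) dq. -/
/-!
The payoff vectors `(∫ u x ∂q)ₓ` of Player 2's mixed strategies form a compact convex set
`K ⊆ ℝ^X`: compact because probability measures on a compact space form a compact space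
(Prokhorov) on which integration against a continuous function is continuous, convex because
mixtures of probability measures are probability measures. Let `c ∈ K` minimise the largest
coordinate `v`. Then `K` misses the open orthant `{s | ∀ x, s x < v}`; a hyperplane separating
the two has a nonnegative normal, since the orthant is closed under decreasing coordinates, and
normalising it gives `p* ∈ Δ_X` with `v ≤ p* ⬝ᵥ k` on `K`. The strategy `q*` with payoff
vector `c` then forms a Nash equilibrium with `p*`.
-/

open MeasureTheory BigOperators

section Minimax

open Set

variable {X : Type*} [Fintype X]

lemma dotProduct_const_right (a : X → ℝ) (t : ℝ) : a ⬝ᵥ (fun _ => t) = t * ∑ x, a x := by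
  simp [dotProduct, Finset.mul_sum, mul_comm]

lemma dotProduct_le_of_mem_stdSimplex {p c : X → ℝ} {t : ℝ} (hp : p ∈ stdSimplex ℝ X)
    (hc : ∀ x, c x ≤ t) : p ⬝ᵥ c ≤ t :=
  calc p ⬝ᵥ c ≤ p ⬝ᵥ (fun _ => t) := dotProduct_le_dotProduct_of_nonneg_left hc hp.1
    _ = t := by rw [dotProduct_const_right, hp.2, mul_one]

lemma StrongDual.exists_forall_apply_eq_dotProduct (f : StrongDual ℝ (X → ℝ)) :
    ∃ a : X → ℝ, ∀ k, f k = a ⬝ᵥ k := by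
  classical
  exact ⟨(dotProductEquiv ℝ X).symm f.toLinearMap, fun k =>
    congr($((dotProductEquiv ℝ X).apply_symm_apply f.toLinearMap) k).symm⟩

section LowerOrthant

variable {a : X → ℝ} {v r : ℝ}

lemma nonneg_of_forall_dotProduct_lt (h : ∀ s, (∀ x, s x < v) → a ⬝ᵥ s < r) : 0 ≤ a := by
  classical
  intro x
  by_contra! hx
  rw [Pi.zero_apply] at hx
  set s₀ : X → ℝ := fun _ => v - 1
  have hs₀ : a ⬝ᵥ s₀ < r := h s₀ fun _ => by simp [s₀]
  -- `t` is chosen so that `a ⬝ᵥ (s₀ - Pi.single x t) = r`.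
  set t := (r - a ⬝ᵥ s₀) / -a x
  have ht : 0 ≤ t := div_nonneg (by linarith) (by linarith)
  have hat : a x * t = -(r - a ⬝ᵥ s₀) := by
    simp only [t]
    field_simp [hx.ne]
  have hlt := h (s₀ - Pi.single x t) fun y => by
    have : 0 ≤ (Pi.single x t : X → ℝ) y := by by_cases hy : y = x <;> simp [hy, ht]
    simp only [Pi.sub_apply, s₀]
    linarith
  rw [dotProduct_sub, dotProduct_single, hat] at hlt
  linarith

lemma dotProduct_const_le_of_forall_dotProduct_lt (h : ∀ s, (∀ x, s x < v) → a ⬝ᵥ s < r) :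
    a ⬝ᵥ (fun _ => v) ≤ r := by
  have hmem : (fun _ => v) ∈ closure (pi univ fun _ : X => Iio v) := by
    simp [closure_pi_set]
  refine closure_minimal (fun s (hs : s ∈ pi univ fun _ => Iio v) =>
    (h s fun x => hs x (mem_univ x)).le) ?_ hmem
  exact isClosed_le (continuous_const.dotProduct continuous_id) continuous_const

end LowerOrthant

variable {K : Set (X → ℝ)}

lemma exists_mem_stdSimplex_forall_le_dotProduct (hK : Convex ℝ K) (hne : K.Nonempty) {v : ℝ}
    (hv : ∀ k ∈ K, ∃ x, v ≤ k x) : ∃ p ∈ stdSimplex ℝ X, ∀ k ∈ K, v ≤ p ⬝ᵥ k := by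
  have hdisj : Disjoint (pi univ fun _ : X => Iio v) K := by
    refine disjoint_left.2 fun s hs hsK => ?_
    obtain ⟨x, hx⟩ := hv s hsK
    exact (hs x (mem_univ x)).not_ge hx
  obtain ⟨f, r, hfS, hfK⟩ := geometric_hahn_banach_open
    (convex_pi fun _ _ => convex_Iio v) (isOpen_set_pi finite_univ fun _ _ => isOpen_Iio) hK hdisj
  obtain ⟨a, ha⟩ := f.exists_forall_apply_eq_dotProduct
  have hS : ∀ s, (∀ x, s x < v) → a ⬝ᵥ s < r := fun s hs => ha s ▸ hfS s fun x _ => hs x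
  have ha₀ : 0 ≤ a := nonneg_of_forall_dotProduct_lt hS
  have hvr : v * ∑ x, a x ≤ r :=
    dotProduct_const_right a v ▸ dotProduct_const_le_of_forall_dotProduct_lt hS
  obtain ⟨k₀, hk₀⟩ := hne
  have hA : 0 < ∑ x, a x := by
    refine (Finset.sum_nonneg fun x _ => ha₀ x).lt_of_ne fun hA => ?_
    have ha0 : a = 0 := funext fun x =>
      (Finset.sum_eq_zero_iff_of_nonneg fun x _ => ha₀ x).1 hA.symm x (Finset.mem_univ x)
    have h1 := hS (fun _ => v - 1) fun _ => by linarith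
    have h2 := ha k₀ ▸ hfK k₀ hk₀
    simp only [ha0, zero_dotProduct] at h1 h2
    linarith
  refine ⟨(∑ x, a x)⁻¹ • a, ⟨fun x => ?_, ?_⟩, fun k hk => ?_⟩
  · exact mul_nonneg (inv_nonneg.2 hA.le) (ha₀ x)
  · simp [← Finset.mul_sum, hA.ne']
  · rw [smul_dotProduct, smul_eq_mul, le_inv_mul_iff₀ hA, mul_comm, ← ha]
    exact hvr.trans (hfK k hk)

lemma IsCompact.exists_saddlePoint_of_convex [Nonempty X] (hKc : IsCompact K)
    (hK : Convex ℝ K) (hne : K.Nonempty) :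
    ∃ c ∈ K, ∃ p ∈ stdSimplex ℝ X, ∀ k ∈ K, ∀ x, c x ≤ p ⬝ᵥ k := by
  have hmax : Continuous fun k : X → ℝ => Finset.univ.sup' Finset.univ_nonempty k :=
    Continuous.finset_sup'_apply _ fun x _ => continuous_apply x
  obtain ⟨c, hcK, hmin⟩ := hKc.exists_isMinOn hne hmax.continuousOn
  obtain ⟨p, hp, hpK⟩ := exists_mem_stdSimplex_forall_le_dotProduct hK hne
    (v := Finset.univ.sup' Finset.univ_nonempty c) fun k hk => by
      simpa using (Finset.le_sup'_iff _).1 (isMinOn_iff.1 hmin k hk)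
  exact ⟨c, hcK, p, hp, fun k hk x => (Finset.le_sup' c (Finset.mem_univ x)).trans (hpK k hk)⟩

end Minimax

section MixedStrategies

variable {Ω : Type*} [MeasurableSpace Ω]

lemma MeasureTheory.ProbabilityMeasure.exists_integral_eq_convexCombination
    (μ ν : ProbabilityMeasure Ω) {a b : ℝ} (ha : 0 ≤ a) (hb : 0 ≤ b) (hab : a + b = 1) :
    ∃ ρ : ProbabilityMeasure Ω, ∀ f : Ω → ℝ, Integrable f μ → Integrable f ν →
      ∫ ω, f ω ∂ρ = a * ∫ ω, f ω ∂μ + b * ∫ ω, f ω ∂ν := by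
  have hρ : IsProbabilityMeasure
      (ENNReal.ofReal a • (μ : Measure Ω) + ENNReal.ofReal b • (ν : Measure Ω)) :=
    ⟨by simp [← ENNReal.ofReal_add ha hb, hab]⟩
  refine ⟨⟨_, hρ⟩, fun f hfμ hfν => ?_⟩
  rw [ProbabilityMeasure.coe_mk, integral_add_measure (hfμ.smul_measure ENNReal.ofReal_ne_top)
    (hfν.smul_measure ENNReal.ofReal_ne_top), integral_smul_measure, integral_smul_measure,
    ENNReal.toReal_ofReal ha, ENNReal.toReal_ofReal hb, smul_eq_mul, smul_eq_mul]

lemma convex_range_integral {X : Type*} (F : X → Ω → ℝ)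
    (hF : ∀ x, ∀ μ : ProbabilityMeasure Ω, Integrable (F x) μ) :
    Convex ℝ (Set.range fun μ : ProbabilityMeasure Ω => fun x => ∫ ω, F x ω ∂μ) := by
  rintro _ ⟨μ, rfl⟩ _ ⟨ν, rfl⟩ a b ha hb hab
  obtain ⟨ρ, hρ⟩ := μ.exists_integral_eq_convexCombination ν ha hb hab
  exact ⟨ρ, funext fun x => hρ (F x) (hF x μ) (hF x ν)⟩

end MixedStrategies

theorem acces_nash_equilibrium_exists
    {X Y : Type*} [Fintype X] [Nonempty X]
    [MetricSpace Y] [CompactSpace Y] [Nonempty Y]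
    [MeasurableSpace Y] [BorelSpace Y]
    (u : X → Y → ℝ) (hc : ∀ x : X, Continuous (u x)) :
    ∃ (pstar : X → ℝ) (qstar : ProbabilityMeasure Y),
      ((∀ x, 0 ≤ pstar x) ∧ ∑ x, pstar x = 1) ∧
      ∀ (p : X → ℝ), ((∀ x, 0 ≤ p x) ∧ ∑ x, p x = 1) →
        ∀ q : ProbabilityMeasure Y,
          (∑ x, p x * ∫ y, u x y ∂(qstar : Measure Y)) ≤
              (∑ x, pstar x * ∫ y, u x y ∂(qstar : Measure Y)) ∧
            (∑ x, pstar x * ∫ y, u x y ∂(qstar : Measure Y)) ≤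
              ∑ x, pstar x * ∫ y, u x y ∂(q : Measure Y) := by
  set payoff : ProbabilityMeasure Y → X → ℝ := fun q x => ∫ y, u x y ∂(q : Measure Y)
  have hcont : Continuous payoff := continuous_pi fun x =>
    ProbabilityMeasure.continuous_integral_continuousMap (⟨u x, hc x⟩ : C(Y, ℝ))
  have hconv : Convex ℝ (Set.range payoff) := convex_range_integral u fun x _ =>
    (hc x).integrable_of_hasCompactSupport (HasCompactSupport.of_compactSpace _)
  inhabit Y
  obtain ⟨_, ⟨qstar, rfl⟩, pstar, hpstar, hsaddle⟩ :=
    (isCompact_range hcont).exists_saddlePoint_of_convex hconv (Set.range_nonempty payoff)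
  refine ⟨pstar, qstar, hpstar, fun p hp q => ⟨?_, ?_⟩⟩
  · exact dotProduct_le_of_mem_stdSimplex hp (hsaddle _ ⟨qstar, rfl⟩)
  · exact dotProduct_le_of_mem_stdSimplex hpstar (hsaddle _ ⟨q, rfl⟩)
end

section
/- If (p*, q*) is a Nash equilibrium of a subgame (X₀, Y₀, u) with X₀ ⊆ X, Y₀ ⊆ Y, and additionally the best response of Player 1 over the full set X is already in X₀ (max_{x∈X} U(x, q*) = max_{x∈X₀} U(x, q*)) and the best response of Player 2 over the full set Y is already attained in the closure of Y₀, with u continuous, then U(x, q*) ≤ U(p*, q*) ≤ U(p*, y) for all x ∈ X and y ∈ Y, so (p*, q*) is a Nash equilibrium of the full game. -/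
open MeasureTheory BigOperators

theorem subgame_equilibrium_extends
    {X Y : Type*} [Fintype X]
    [MetricSpace Y] [CompactSpace Y] [Nonempty Y]
    [MeasurableSpace Y] [BorelSpace Y]
    (u : X → Y → ℝ) (hc : ∀ x : X, Continuous (u x))
    (X₀ : Finset X) (hX₀ : X₀.Nonempty)
    (Y₀ : Set Y) (hY₀ : Y₀.Nonempty)
    (pstar : X → ℝ) (hpstar : (∀ x, 0 ≤ pstar x) ∧ ∑ x, pstar x = 1)
    (qstar : ProbabilityMeasure Y)
    (hsubeq : (∀ x ∈ X₀,
        (∫ y, u x y ∂(qstar : Measure Y)) ≤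
          ∑ x', pstar x' * ∫ y, u x' y ∂(qstar : Measure Y)) ∧
      ∀ y ∈ Y₀,
        (∑ x', pstar x' * ∫ y', u x' y' ∂(qstar : Measure Y)) ≤
          ∑ x', pstar x' * u x' y)
    (hbrX : ∃ x₀ ∈ X₀, ∀ x : X,
      (∫ y, u x y ∂(qstar : Measure Y)) ≤ ∫ y, u x₀ y ∂(qstar : Measure Y))
    (hbrY : ∃ y₀ ∈ closure Y₀, ∀ y : Y,
      (∑ x', pstar x' * u x' y₀) ≤ ∑ x', pstar x' * u x' y) :
    ∀ (x : X) (y : Y),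
      (∫ y', u x y' ∂(qstar : Measure Y)) ≤
          (∑ x', pstar x' * ∫ y', u x' y' ∂(qstar : Measure Y)) ∧
        (∑ x', pstar x' * ∫ y', u x' y' ∂(qstar : Measure Y)) ≤
          ∑ x', pstar x' * u x' y := by
  obtain ⟨x₀, hx₀, hx₀max⟩ := hbrX
  obtain ⟨y₀, hy₀, hy₀min⟩ := hbrY
  intro x y
  constructor
  · exact (hx₀max x).trans (hsubeq.1 x₀ hx₀)
  · have hfc : Continuous (fun y => ∑ x', pstar x' * u x' y) :=
      continuous_finset_sum _ (fun x' _ => continuous_const.mul (hc x'))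
    have hcl : y₀ ∈ {y | (∑ x', pstar x' * ∫ y', u x' y' ∂(qstar : Measure Y)) ≤
        ∑ x', pstar x' * u x' y} := by
      have : IsClosed {y | (∑ x', pstar x' * ∫ y', u x' y' ∂(qstar : Measure Y)) ≤
          ∑ x', pstar x' * u x' y} := isClosed_le continuous_const hfc
      exact closure_minimal (fun z hz => hsubeq.2 z hz) this hy₀
    exact hcl.trans (hy₀min y)
end
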